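/- Let N be an orchard network. Then every maximal sequence of cherry reductions applied to N is complete, i.e., terminates in the single-vertex network. Equivalently: if N is an orchard network and N' is obtained from N by applying cherry reductions until neither a cherry nor a reticulated cherry exists, then N' consists of a single vertex. -/

import Mathlib

/-- A finite directed graph on natural-number vertices, with no parallel arcs
(arcs form a `Finset` of ordered pairs). -/
structure Digraph' where
  V : Finset ℕ
  A : Finset (ℕ × ℕ)
  mem_V : ∀ e ∈ A, e.1 ∈ V ∧ e.2 ∈ V

namespace Digraph'

def inDeg (N : Digraph') (v : ℕ) : ℕ := (N.A.filter (fun e => e.2 = v)).card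

def outDeg (N : Digraph') (v : ℕ) : ℕ := (N.A.filter (fun e => e.1 = v)).card

/-- Reachability by a directed path (including paths of length 0). -/
def Reach (N : Digraph') : ℕ → ℕ → Prop :=
  Relation.ReflTransGen (fun u v => (u, v) ∈ N.A)

def Acyclic (N : Digraph') : Prop := ∀ u v, (u, v) ∈ N.A → ¬ N.Reach v u

def IsLeaf (N : Digraph') (v : ℕ) : Prop := v ∈ N.V ∧ N.outDeg v = 0

def IsTreeVertex (N : Digraph') (v : ℕ) : Prop :=
  v ∈ N.V ∧ N.inDeg v = 1 ∧ N.outDeg v = 2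

def IsRet (N : Digraph') (v : ℕ) : Prop :=
  v ∈ N.V ∧ N.inDeg v = 2 ∧ N.outDeg v = 1

/-- `N` is a (binary) phylogenetic network on leaf set `X`. -/
structure IsPhylo (N : Digraph') (X : Finset ℕ) : Prop where
  acyclic : N.Acyclic
  X_sub : X ⊆ N.V
  leafSet : ∀ v ∈ N.V, (N.outDeg v = 0 ↔ v ∈ X)
  root : ∃ ρ ∈ N.V, N.inDeg ρ = 0 ∧ N.outDeg ρ = 2 ∧ ∀ v ∈ N.V, N.Reach ρ v
  degrees : ∀ v ∈ N.V,
    (N.inDeg v = 0 ∧ N.outDeg v = 2) ∨ (N.inDeg v = 1 ∧ N.outDeg v = 0) ∨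
    (N.inDeg v = 1 ∧ N.outDeg v = 2) ∨ (N.inDeg v = 2 ∧ N.outDeg v = 1)

/-- The degenerate single-vertex network. -/
def IsSingle (N : Digraph') : Prop := ∃ x, N.V = {x} ∧ N.A = ∅

/-- `{a, b}` is a cherry: two distinct leaves with a common parent. -/
def IsCherry (N : Digraph') (a b : ℕ) : Prop :=
  a ≠ b ∧ N.IsLeaf a ∧ N.IsLeaf b ∧ ∃ p, (p, a) ∈ N.A ∧ (p, b) ∈ N.A

/-- `{a, b}` is a reticulated cherry with `b` the reticulation leaf. -/
def IsRetCherry (N : Digraph') (a b : ℕ) : Prop :=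
  a ≠ b ∧ N.IsLeaf a ∧ N.IsLeaf b ∧
  ∃ pa pb, (pa, a) ∈ N.A ∧ (pb, b) ∈ N.A ∧ N.inDeg pb = 2 ∧ (pa, pb) ∈ N.A

/-- `N'` is obtained from `N` by reducing the leaf `b` of the cherry `{a, b}`:
delete `b` and suppress the resulting in-degree-1 out-degree-1 vertex
(if the common parent is the root, delete `b` and the root, leaving the single
vertex `a`). -/
def ReduceCherry (N N' : Digraph') (a b : ℕ) : Prop :=
  N.IsCherry a b ∧ ∃ p, (p, a) ∈ N.A ∧ (p, b) ∈ N.A ∧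
    ((N.inDeg p = 0 ∧ N'.V = {a} ∧ N'.A = ∅) ∨
     (∃ u, (u, p) ∈ N.A ∧ N'.V = (N.V.erase b).erase p ∧
        N'.A = insert (u, a) (((N.A.erase (u, p)).erase (p, a)).erase (p, b))))

/-- `N'` is obtained from `N` by cutting the reticulated cherry `{a, b}` with `b`
the reticulation leaf: delete the reticulation arc from the parent of `a` to the
parent of `b`, and suppress the two resulting in-degree-1 out-degree-1 vertices. -/
def CutRetCherry (N N' : Digraph') (a b : ℕ) : Prop :=
  N.IsRetCherry a b ∧ ∃ pa pb ua q,
    (pa, a) ∈ N.A ∧ (pb, b) ∈ N.A ∧ N.inDeg pb = 2 ∧ (pa, pb) ∈ N.A ∧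
    (ua, pa) ∈ N.A ∧ (q, pb) ∈ N.A ∧ q ≠ pa ∧
    N'.V = (N.V.erase pa).erase pb ∧
    N'.A = insert (ua, a) (insert (q, b)
      (((((N.A.erase (pa, pb)).erase (ua, pa)).erase (pa, a)).erase (q, pb)).erase (pb, b)))

/-- A single cherry reduction. -/
def CherryStep (N N' : Digraph') : Prop :=
  ∃ a b, ReduceCherry N N' a b ∨ CutRetCherry N N' a b

/-- `N` is an orchard network: some sequence of cherry reductions reduces it to a
single vertex. -/
def IsOrchard (N : Digraph') : Prop :=
  ∃ N', Relation.ReflTransGen CherryStep N N' ∧ IsSingle N'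

/-- The ancestral set `γ(x)`: the non-leaf vertices from which `x` is reachable. -/
def gamma (N : Digraph') (x : ℕ) : Set ℕ :=
  {v | v ∈ N.V ∧ N.outDeg v ≠ 0 ∧ N.Reach v x}

/-- The number of directed paths in `N` from `u` to `x` (a path is recorded as the
list of its vertices; the single-vertex path counts when `u = x`). -/
noncomputable def numPaths (N : Digraph') (u x : ℕ) : ℕ :=
  Set.ncard {l : List ℕ | l.head? = some u ∧ l.getLast? = some x ∧
    l.Chain' (fun p q => (p, q) ∈ N.A)}

/-- Tree-sibling: every reticulation has a parent that is also the parent of a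
tree vertex or a leaf. -/
def TreeSibling (N : Digraph') : Prop :=
  ∀ v ∈ N.V, N.inDeg v = 2 → ∃ p w, (p, v) ∈ N.A ∧ (p, w) ∈ N.A ∧ w ≠ v ∧
    (N.IsTreeVertex w ∨ N.IsLeaf w)

/-- Time-consistent: there is a temporal labelling of the vertices. -/
def TimeConsistent (N : Digraph') : Prop :=
  ∃ t : ℕ → ℕ, ∀ u v, (u, v) ∈ N.A →
    (N.inDeg v = 2 → t u = t v) ∧ (N.inDeg v ≠ 2 → t u < t v)

/-- Tree-child: every non-leaf vertex has a child that is a tree vertex or a leaf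
(equivalently, a child of in-degree one). -/
def TreeChild (N : Digraph') : Prop :=
  ∀ v ∈ N.V, N.outDeg v ≠ 0 → ∃ w, (v, w) ∈ N.A ∧ N.inDeg w = 1

end Digraph'

open Digraph'

/-! Reducing a cherry or cutting a reticulated cherry of an orchard network yields an orchard
network. Granting this, the theorem follows by induction along the given sequence, because an
orchard network without cherries and reticulated cherries admits no reduction at all, so its
complete sequence is empty and it is already a single vertex.

Preservation is proved by induction on a complete sequence `N → B → ⋯` through a diamond
property of two reductions `N → P` and `N → B` of a phylogenetic network: either `B` is `P` up
to relabelling the vertices (the same cherry, reduced at either of its leaves), or one more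
reduction of each leads to a common network. Reductions at disjoint sets of vertices commute;
the only overlapping case is that of two reticulated cherries with the same reticulation leaf,
where cutting either one turns the other into a cherry. -/

theorem Finset.eq_or_eq_of_card_eq_two {α : Type*} [DecidableEq α] {s : Finset α}
    {x y z : α} (h : s.card = 2) (hx : x ∈ s) (hy : y ∈ s) (hxy : x ≠ y) (hz : z ∈ s) :
    z = x ∨ z = y := by
  obtain ⟨a, b, -, rfl⟩ := Finset.card_eq_two.mp h
  simp only [Finset.mem_insert, Finset.mem_singleton] at hx hy hz
  grind

namespace Digraph'

variable {N P Q : Digraph'}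

theorem ext {M : Digraph'} (hV : N.V = M.V) (hA : N.A = M.A) : N = M := by
  cases N; cases M; simp_all

theorem eq_of_inDeg_eq_one {v x y : ℕ} (h : N.inDeg v = 1) (hx : (x, v) ∈ N.A)
    (hy : (y, v) ∈ N.A) : x = y := by
  simpa using Finset.card_le_one.mp h.le (x, v) (by simp [hx]) (y, v) (by simp [hy])

theorem eq_of_outDeg_eq_one {v x y : ℕ} (h : N.outDeg v = 1) (hx : (v, x) ∈ N.A)
    (hy : (v, y) ∈ N.A) : x = y := by
  simpa using Finset.card_le_one.mp h.le (v, x) (by simp [hx]) (v, y) (by simp [hy])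

theorem eq_or_eq_of_outDeg_eq_two {v x y z : ℕ} (h : N.outDeg v = 2) (hx : (v, x) ∈ N.A)
    (hy : (v, y) ∈ N.A) (hxy : x ≠ y) (hz : (v, z) ∈ N.A) : z = x ∨ z = y := by
  simpa using Finset.eq_or_eq_of_card_eq_two (x := (v, x)) (y := (v, y)) h
    (by simp [hx]) (by simp [hy]) (by simpa) (by simp [hz] : (v, z) ∈ N.A.filter (·.1 = v))

theorem eq_of_inDeg_eq_two {v x y z : ℕ} (h : N.inDeg v = 2) (hx : (x, v) ∈ N.A)
    (hy : (y, v) ∈ N.A) (hxy : x ≠ y) (hz : (z, v) ∈ N.A) (hzx : z ≠ x) : z = y := by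
  simpa [hzx] using Finset.eq_or_eq_of_card_eq_two (x := (x, v)) (y := (y, v)) h
    (by simp [hx]) (by simp [hy]) (by simpa) (by simp [hz] : (z, v) ∈ N.A.filter (·.2 = v))

theorem notMem_A_of_outDeg_eq_zero {v x : ℕ} (h : N.outDeg v = 0) : (v, x) ∉ N.A :=
  fun hx => Finset.filter_eq_empty_iff.mp (Finset.card_eq_zero.mp h) hx rfl

theorem notMem_A_of_inDeg_eq_zero {v x : ℕ} (h : N.inDeg v = 0) : (x, v) ∉ N.A :=
  fun hx => Finset.filter_eq_empty_iff.mp (Finset.card_eq_zero.mp h) hx rfl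

theorem outDeg_ne_zero {v x : ℕ} (h : (v, x) ∈ N.A) : N.outDeg v ≠ 0 :=
  fun h0 => notMem_A_of_outDeg_eq_zero h0 h

theorem inDeg_ne_zero {v x : ℕ} (h : (x, v) ∈ N.A) : N.inDeg v ≠ 0 :=
  fun h0 => notMem_A_of_inDeg_eq_zero h0 h

theorem ne_of_mem_A_of_outDeg_eq_zero {x y z : ℕ} (h : (x, y) ∈ N.A) (hz : N.outDeg z = 0) :
    x ≠ z := fun hxz => outDeg_ne_zero h (hxz ▸ hz)

theorem ne_of_parent_ne {x y px py : ℕ} (hx : (px, x) ∈ N.A) (hy : (py, y) ∈ N.A)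
    (hin : N.inDeg x = 1) (hp : px ≠ py) : x ≠ y := fun hxy =>
  hp (eq_of_inDeg_eq_one hin hx (hxy ▸ hy))

theorem two_le_outDeg {p a b : ℕ} (ha : (p, a) ∈ N.A) (hb : (p, b) ∈ N.A) (hab : a ≠ b) :
    2 ≤ N.outDeg p :=
  Finset.one_lt_card.mpr ⟨(p, a), by simp [ha], (p, b), by simp [hb], by simp [hab]⟩

theorem eq_of_reach_of_outDeg_eq_zero {v x : ℕ} (h : N.outDeg v = 0) (hr : N.Reach v x) :
    x = v := by
  rcases hr.cases_head with rfl | ⟨c, hc, -⟩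
  · rfl
  · exact absurd hc (notMem_A_of_outDeg_eq_zero h)

theorem Acyclic.ne {x y : ℕ} (hN : N.Acyclic) (h : (x, y) ∈ N.A) : x ≠ y := by
  rintro rfl
  exact hN x x h .refl

theorem not_cherryStep_of_isSingle (h : IsSingle N) : ¬ CherryStep N P := by
  obtain ⟨x, -, hA⟩ := h
  rintro ⟨a, b, ⟨⟨-, -, -, p, hp, -⟩, -⟩ | ⟨⟨-, -, -, pa, pb, hp, -⟩, -⟩⟩ <;> simp [hA] at hp

def leaves (N : Digraph') : Finset ℕ := N.V.filter (N.outDeg · = 0)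

def IsNetwork (N : Digraph') : Prop := N.IsPhylo N.leaves ∨ IsSingle N

namespace IsPhylo

variable {X : Finset ℕ} (hN : N.IsPhylo X)
include hN

theorem eq_leaves : X = N.leaves := by
  ext v
  simp only [leaves, Finset.mem_filter]
  exact ⟨fun hv => ⟨hN.X_sub hv, (hN.leafSet v (hN.X_sub hv)).mpr hv⟩,
    fun hv => (hN.leafSet v hv.1).mp hv.2⟩

theorem isNetwork : N.IsNetwork := .inl (hN.eq_leaves ▸ hN)

theorem inDeg_eq_one_of_outDeg_eq_zero {v : ℕ} (hv : v ∈ N.V) (h : N.outDeg v = 0) :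
    N.inDeg v = 1 := by
  rcases hN.degrees v hv with h' | h' | h' | h' <;> omega

theorem outDeg_eq_one_of_inDeg_eq_two {v : ℕ} (hv : v ∈ N.V) (h : N.inDeg v = 2) :
    N.outDeg v = 1 := by
  rcases hN.degrees v hv with h' | h' | h' | h' <;> omega

theorem outDeg_eq_two {p a b : ℕ} (ha : (p, a) ∈ N.A) (hb : (p, b) ∈ N.A) (hab : a ≠ b) :
    N.outDeg p = 2 := by
  have := two_le_outDeg ha hb hab
  rcases hN.degrees p (N.mem_V _ ha).1 with h' | h' | h' | h' <;> omega

theorem inDeg_eq_one_of_two_children {u p a b : ℕ} (hu : (u, p) ∈ N.A) (ha : (p, a) ∈ N.A)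
    (hb : (p, b) ∈ N.A) (hab : a ≠ b) : N.inDeg p = 1 := by
  have := two_le_outDeg ha hb hab
  have := inDeg_ne_zero hu
  rcases hN.degrees p (N.mem_V _ ha).1 with h' | h' | h' | h' <;> omega

theorem eq_of_inDeg_eq_zero {v w : ℕ} (hv : v ∈ N.V) (hv0 : N.inDeg v = 0) (hw : w ∈ N.V)
    (hw0 : N.inDeg w = 0) : v = w := by
  obtain ⟨ρ, -, -, -, hρ⟩ := hN.root
  have eq_root : ∀ x ∈ N.V, N.inDeg x = 0 → x = ρ := fun x hx hx0 => by
    rcases (hρ x hx).cases_tail with rfl | ⟨m, -, hm⟩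
    · rfl
    · exact absurd hm (notMem_A_of_inDeg_eq_zero hx0)
  rw [eq_root v hv hv0, eq_root w hw hw0]

theorem V_eq_of_root_cherry {p a b : ℕ} (ha : (p, a) ∈ N.A) (hb : (p, b) ∈ N.A) (hab : a ≠ b)
    (hla : N.outDeg a = 0) (hlb : N.outDeg b = 0) (hp : N.inDeg p = 0) :
    N.V = {p, a, b} := by
  obtain ⟨ρ, hρ, hρ0, -, hreach⟩ := hN.root
  obtain rfl := hN.eq_of_inDeg_eq_zero (N.mem_V _ ha).1 hp hρ hρ0
  refine Finset.Subset.antisymm (fun v hv => ?_) ?_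
  · rcases (hreach v hv).cases_head with rfl | ⟨c, hc, hcv⟩
    · simp
    · rcases eq_or_eq_of_outDeg_eq_two (hN.outDeg_eq_two ha hb hab) ha hb hab hc with
        rfl | rfl
      · simp [eq_of_reach_of_outDeg_eq_zero hla hcv]
      · simp [eq_of_reach_of_outDeg_eq_zero hlb hcv]
  · simp [Finset.insert_subset_iff, (N.mem_V _ ha).1, (N.mem_V _ ha).2, (N.mem_V _ hb).2]

theorem isSingle_of_root_cherry {p a b : ℕ} (ha : (p, a) ∈ N.A) (hb : (p, b) ∈ N.A)
    (hab : a ≠ b) (hla : N.outDeg a = 0) (hlb : N.outDeg b = 0) (hp : N.inDeg p = 0)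
    (h : CherryStep N P) : IsSingle P := by
  have hV := hN.V_eq_of_root_cherry ha hb hab hla hlb hp
  have hdeg : ∀ v ∈ N.V, (N.outDeg v = 0 ∧ N.inDeg v = 1) ∨ N.inDeg v = 0 := by
    intro v hv
    rw [hV] at hv
    simp only [Finset.mem_insert, Finset.mem_singleton] at hv
    rcases hv with rfl | rfl | rfl
    · exact .inr hp
    · exact .inl ⟨hla, hN.inDeg_eq_one_of_outDeg_eq_zero (N.mem_V _ ha).2 hla⟩
    · exact .inl ⟨hlb, hN.inDeg_eq_one_of_outDeg_eq_zero (N.mem_V _ hb).2 hlb⟩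
  obtain ⟨c, d, ⟨-, p', hc, -, ⟨-, hPV, hPA⟩ | ⟨u, hu, -⟩⟩ | ⟨-, pa, pb, -, -, -, hpb, h2, -⟩⟩ := h
  · exact ⟨c, hPV, hPA⟩
  · rcases hdeg p' (N.mem_V _ hc).1 with h' | h'
    · exact absurd hc (notMem_A_of_outDeg_eq_zero h'.1)
    · exact absurd hu (notMem_A_of_inDeg_eq_zero h')
  · rcases hdeg pb (N.mem_V _ hpb).1 with h' | h' <;> omega

end IsPhylo

def map (σ : ℕ ≃ ℕ) (N : Digraph') : Digraph' where
  V := N.V.map σ.toEmbedding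
  A := N.A.map (σ.prodCongr σ).toEmbedding
  mem_V e he := by
    simp only [Finset.mem_map_equiv] at he ⊢
    exact N.mem_V _ he

section map

variable (σ : ℕ ≃ ℕ)

theorem map_V : (N.map σ).V = N.V.map σ.toEmbedding := rfl

theorem map_A : (N.map σ).A = N.A.map (σ.prodCongr σ).toEmbedding := rfl

theorem mem_map_V {v : ℕ} : σ v ∈ (N.map σ).V ↔ v ∈ N.V := by
  simp [map_V]

theorem mem_map_A {x y : ℕ} : (σ x, σ y) ∈ (N.map σ).A ↔ (x, y) ∈ N.A := by
  simp [map_A, Finset.mem_map_equiv]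

theorem inDeg_map (v : ℕ) : (N.map σ).inDeg (σ v) = N.inDeg v := by
  rw [inDeg, inDeg, map_A, Finset.filter_map, Finset.card_map]
  congr 1
  exact Finset.filter_congr fun e _ => by simp

theorem outDeg_map (v : ℕ) : (N.map σ).outDeg (σ v) = N.outDeg v := by
  rw [outDeg, outDeg, map_A, Finset.filter_map, Finset.card_map]
  congr 1
  exact Finset.filter_congr fun e _ => by simp

theorem map_refl : N.map (Equiv.refl ℕ) = N :=
  ext (by simp [map_V]) (by ext e; simp [map_A, Finset.mem_map_equiv])

theorem map_symm_map : (N.map σ).map σ.symm = N := by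
  refine ext ?_ ?_
  · ext v; simp [map_V, Finset.mem_map_equiv]
  · ext ⟨x, y⟩; simp [map_A, Finset.mem_map_equiv]

theorem IsSingle.map (h : IsSingle N) : IsSingle (N.map σ) := by
  obtain ⟨x, hV, hA⟩ := h
  exact ⟨σ x, by simp [map_V, hV], by simp [map_A, hA]⟩

theorem IsCherry.map {a b : ℕ} (h : N.IsCherry a b) : (N.map σ).IsCherry (σ a) (σ b) := by
  obtain ⟨hab, ⟨ha, hla⟩, ⟨hb, hlb⟩, p, hpa, hpb⟩ := h
  exact ⟨σ.injective.ne hab, ⟨(mem_map_V σ).mpr ha, by rw [outDeg_map, hla]⟩,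
    ⟨(mem_map_V σ).mpr hb, by rw [outDeg_map, hlb]⟩,
    σ p, (mem_map_A σ).mpr hpa, (mem_map_A σ).mpr hpb⟩

theorem IsRetCherry.map {a b : ℕ} (h : N.IsRetCherry a b) :
    (N.map σ).IsRetCherry (σ a) (σ b) := by
  obtain ⟨hab, ⟨ha, hla⟩, ⟨hb, hlb⟩, pa, pb, hpa, hpb, h2, hret⟩ := h
  exact ⟨σ.injective.ne hab, ⟨(mem_map_V σ).mpr ha, by rw [outDeg_map, hla]⟩,
    ⟨(mem_map_V σ).mpr hb, by rw [outDeg_map, hlb]⟩, σ pa, σ pb, (mem_map_A σ).mpr hpa,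
    (mem_map_A σ).mpr hpb, by rw [inDeg_map, h2], (mem_map_A σ).mpr hret⟩

theorem ReduceCherry.map {a b : ℕ} (h : ReduceCherry N P a b) :
    ReduceCherry (N.map σ) (P.map σ) (σ a) (σ b) := by
  obtain ⟨hc, p, hpa, hpb, ⟨h0, hV, hA⟩ | ⟨u, hup, hV, hA⟩⟩ := h
  · exact ⟨hc.map σ, σ p, (mem_map_A σ).mpr hpa, (mem_map_A σ).mpr hpb,
      .inl ⟨by rw [inDeg_map, h0], by simp [map_V, hV], by simp [map_A, hA]⟩⟩
  · exact ⟨hc.map σ, σ p, (mem_map_A σ).mpr hpa, (mem_map_A σ).mpr hpb,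
      .inr ⟨σ u, (mem_map_A σ).mpr hup, by simp [map_V, hV], by simp [map_A, hA]⟩⟩

theorem CutRetCherry.map {a b : ℕ} (h : CutRetCherry N P a b) :
    CutRetCherry (N.map σ) (P.map σ) (σ a) (σ b) := by
  obtain ⟨hc, pa, pb, ua, q, hpa, hpb, h2, hret, hua, hq, hqpa, hV, hA⟩ := h
  exact ⟨hc.map σ, σ pa, σ pb, σ ua, σ q, (mem_map_A σ).mpr hpa, (mem_map_A σ).mpr hpb,
    by rw [inDeg_map, h2], (mem_map_A σ).mpr hret, (mem_map_A σ).mpr hua,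
    (mem_map_A σ).mpr hq, σ.injective.ne hqpa, by simp [map_V, hV], by simp [map_A, hA]⟩

theorem CherryStep.map (h : CherryStep N P) : CherryStep (N.map σ) (P.map σ) := by
  obtain ⟨a, b, h | h⟩ := h
  exacts [⟨σ a, σ b, .inl (h.map σ)⟩, ⟨σ a, σ b, .inr (h.map σ)⟩]

theorem IsOrchard.map (h : N.IsOrchard) : (N.map σ).IsOrchard := by
  obtain ⟨M, hNM, hM⟩ := h
  exact ⟨M.map σ, hNM.lift _ fun _ _ h => h.map σ, hM.map σ⟩

end map

theorem IsOrchard.of_map {σ : ℕ ≃ ℕ} (h : (N.map σ).IsOrchard) : N.IsOrchard :=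
  map_symm_map σ (N := N) ▸ h.map σ.symm

theorem IsSingle.exists_eq_map (hN : IsSingle N) (hP : IsSingle P) : ∃ σ, P = N.map σ := by
  obtain ⟨x, hNV, hNA⟩ := hN
  obtain ⟨y, hPV, hPA⟩ := hP
  exact ⟨Equiv.swap x y, ext (by simp [map_V, hNV, hPV]) (by simp [map_A, hNA, hPA])⟩

structure Rewrite (N P : Digraph') (W : Finset ℕ) (D I : Finset (ℕ × ℕ)) : Prop where
  V_eq : P.V = N.V \ W
  A_eq : P.A = N.A \ D ∪ I

namespace Rewrite

variable {W : Finset ℕ} {D I : Finset (ℕ × ℕ)}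

theorem mem_V (h : Rewrite N P W D I) {v : ℕ} : v ∈ P.V ↔ v ∈ N.V ∧ v ∉ W := by
  rw [h.V_eq, Finset.mem_sdiff]

theorem mem_A (h : Rewrite N P W D I) {e : ℕ × ℕ} : e ∈ P.A ↔ e ∈ I ∨ e ∈ N.A ∧ e ∉ D := by
  rw [h.A_eq, Finset.mem_union, Finset.mem_sdiff, or_comm]

theorem card_filter_add (h : Rewrite N P W D I) (hD : D ⊆ N.A) (hI : Disjoint N.A I)
    (q : ℕ × ℕ → Prop) [DecidablePred q] :
    (P.A.filter q).card + (D.filter q).card = (N.A.filter q).card + (I.filter q).card := by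
  have hsplit : P.A.filter q = (N.A.filter q \ D.filter q) ∪ I.filter q := by
    ext e; simp only [h.A_eq, Finset.mem_filter, Finset.mem_union, Finset.mem_sdiff]; tauto
  have hdisj : Disjoint (N.A.filter q \ D.filter q) (I.filter q) :=
    Finset.disjoint_of_subset_left (Finset.sdiff_subset.trans (Finset.filter_subset _ _))
      (Finset.disjoint_of_subset_right (Finset.filter_subset _ _) hI)
  rw [hsplit, Finset.card_union_of_disjoint hdisj, add_right_comm,
    Finset.card_sdiff_add_card_eq_card (Finset.filter_subset_filter _ hD)]

theorem inDeg_eq (h : Rewrite N P W D I) (hD : D ⊆ N.A) (hI : Disjoint N.A I) {v : ℕ}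
    (hv : (D.filter (·.2 = v)).card = (I.filter (·.2 = v)).card) :
    P.inDeg v = N.inDeg v := by
  have := h.card_filter_add hD hI (·.2 = v)
  rw [inDeg, inDeg]
  omega

theorem outDeg_eq (h : Rewrite N P W D I) (hD : D ⊆ N.A) (hI : Disjoint N.A I) {v : ℕ}
    (hv : (D.filter (·.1 = v)).card = (I.filter (·.1 = v)).card) :
    P.outDeg v = N.outDeg v := by
  have := h.card_filter_add hD hI (·.1 = v)
  rw [outDeg, outDeg]
  omega

theorem unique (hP : Rewrite N P W D I) (hQ : Rewrite N Q W D I) : P = Q :=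
  ext (hP.V_eq.trans hQ.V_eq.symm) (hP.A_eq.trans hQ.A_eq.symm)

theorem map (h : Rewrite N P W D I) (σ : ℕ ≃ ℕ) :
    Rewrite (N.map σ) (P.map σ) (W.map σ.toEmbedding) (D.map (σ.prodCongr σ).toEmbedding)
      (I.map (σ.prodCongr σ).toEmbedding) :=
  ⟨by rw [map_V, map_V, h.V_eq, Finset.map_sdiff], by
    rw [map_A, map_A, h.A_eq, Finset.map_union, Finset.map_sdiff]⟩

theorem eq_of_disjoint {R R' : Digraph'} {W' : Finset ℕ} {D' I' : Finset (ℕ × ℕ)}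
    {T T' : Finset ℕ} (hP : Rewrite N P W D I) (hR : Rewrite P R W' D' I')
    (hQ : Rewrite N Q W' D' I') (hR' : Rewrite Q R' W D I) (hT : Disjoint T T')
    (hDI : ∀ e ∈ D ∪ I, e.2 ∈ T) (hDI' : ∀ e ∈ D' ∪ I', e.2 ∈ T') : R = R' := by
  have hsep : ∀ e, (e ∈ D ∨ e ∈ I) → e ∉ D' ∧ e ∉ I' := fun e he => by
    have h₁ := hDI e (Finset.mem_union.mpr he)
    refine ⟨fun h => ?_, fun h => ?_⟩ <;>
      exact Finset.disjoint_left.mp hT h₁ (hDI' e (by simp [h]))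
  refine ext ?_ ?_
  · rw [hR.V_eq, hP.V_eq, hR'.V_eq, hQ.V_eq, sdiff_sdiff_comm]
  · ext e
    rw [hR.mem_A, hP.mem_A, hR'.mem_A, hQ.mem_A]
    have := hsep e
    tauto

end Rewrite

theorem exists_rewrite {W : Finset ℕ} {D I : Finset (ℕ × ℕ)}
    (h : ∀ e ∈ N.A \ D ∪ I, e.1 ∈ N.V \ W ∧ e.2 ∈ N.V \ W) : ∃ P, Rewrite N P W D I :=
  ⟨⟨N.V \ W, N.A \ D ∪ I, h⟩, rfl, rfl⟩

theorem reach_of_reach_of_closed {T : Set ℕ} (hT : ∀ x y, (x, y) ∈ N.A → x ∈ T → y ∈ T)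
    (hP : ∀ x y, (x, y) ∈ N.A → x ∉ T → y ∉ T → (x, y) ∈ P.A) {x v : ℕ}
    (h : N.Reach x v) (hv : v ∉ T) : P.Reach x v := by
  induction h with
  | refl => exact .refl
  | @tail y v _ hyv ih =>
    have hy : y ∉ T := fun hy => hv (hT y v hyv hy)
    exact (ih hy).tail (hP y v hyv hy hv)

theorem IsPhylo.of_degrees_eq {X : Finset ℕ} (hN : N.IsPhylo X) (hV : P.V ⊆ N.V)
    (hin : ∀ v ∈ P.V, P.inDeg v = N.inDeg v) (hout : ∀ v ∈ P.V, P.outDeg v = N.outDeg v)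
    (hA : ∀ x y, (x, y) ∈ P.A → Relation.TransGen (fun x y => (x, y) ∈ N.A) x y)
    {ρ : ℕ} (hρ : ρ ∈ P.V) (hρ0 : N.inDeg ρ = 0) (hreach : ∀ v ∈ P.V, P.Reach ρ v) :
    P.IsPhylo P.leaves where
  acyclic x y hxy hyx := by
    obtain ⟨z, hxz, hzy⟩ := Relation.TransGen.head'_iff.mp (hA x y hxy)
    have hyx' : N.Reach y x :=
      Relation.ReflTransGen.lift' id (fun a b h => (hA a b h).to_reflTransGen) _ _ hyx
    exact hN.acyclic x z hxz (hzy.trans hyx')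
  X_sub := Finset.filter_subset _ _
  leafSet v hv := by simp [leaves, hv]
  root := by
    refine ⟨ρ, hρ, by rw [hin ρ hρ, hρ0], ?_, hreach⟩
    rcases hN.degrees ρ (hV hρ) with h | h | h | h <;> rw [hout ρ hρ] <;> omega
  degrees v hv := by
    rw [hin v hv, hout v hv]
    exact hN.degrees v (hV hv)

structure CherryAt (N : Digraph') (a b u p : ℕ) : Prop where
  phylo : N.IsPhylo N.leaves
  ne : a ≠ b
  leaf_a : N.outDeg a = 0
  leaf_b : N.outDeg b = 0
  arc_a : (p, a) ∈ N.A
  arc_b : (p, b) ∈ N.A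
  arc_p : (u, p) ∈ N.A

namespace CherryAt

variable {a b u p : ℕ} (C : CherryAt N a b u p)
include C

theorem out_p : N.outDeg p = 2 := C.phylo.outDeg_eq_two C.arc_a C.arc_b C.ne
theorem in_p : N.inDeg p = 1 := C.phylo.inDeg_eq_one_of_two_children C.arc_p C.arc_a C.arc_b C.ne
theorem in_a : N.inDeg a = 1 :=
  C.phylo.inDeg_eq_one_of_outDeg_eq_zero (N.mem_V _ C.arc_a).2 C.leaf_a
theorem in_b : N.inDeg b = 1 :=
  C.phylo.inDeg_eq_one_of_outDeg_eq_zero (N.mem_V _ C.arc_b).2 C.leaf_b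
theorem u_ne_p : u ≠ p := C.phylo.acyclic.ne C.arc_p
theorem p_ne_a : p ≠ a := ne_of_mem_A_of_outDeg_eq_zero C.arc_a C.leaf_a
theorem p_ne_b : p ≠ b := ne_of_mem_A_of_outDeg_eq_zero C.arc_a C.leaf_b
theorem u_ne_a : u ≠ a := ne_of_mem_A_of_outDeg_eq_zero C.arc_p C.leaf_a
theorem u_ne_b : u ≠ b := ne_of_mem_A_of_outDeg_eq_zero C.arc_p C.leaf_b

theorem subset_A : {(u, p), (p, a), (p, b)} ⊆ N.A := by
  simp [Finset.insert_subset_iff, C.arc_a, C.arc_b, C.arc_p]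

theorem disjoint_A : Disjoint N.A {(u, a)} := by
  simpa using fun h => C.u_ne_p (eq_of_inDeg_eq_one C.in_a h C.arc_a)

theorem exists_rewrite :
    ∃ P, Rewrite N P {b, p} {(u, p), (p, a), (p, b)} {(u, a)} := by
  refine Digraph'.exists_rewrite fun e he => ?_
  simp only [Finset.mem_union, Finset.mem_sdiff, Finset.mem_singleton, Finset.mem_insert,
    not_or] at he ⊢
  rcases he with ⟨he, hup, hpa, hpb⟩ | rfl
  · obtain ⟨x, y⟩ := e
    refine ⟨⟨(N.mem_V _ he).1, fun h => ?_, fun h => ?_⟩, (N.mem_V _ he).2, fun h => ?_,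
      fun h => ?_⟩ <;> subst h
    · exact notMem_A_of_outDeg_eq_zero C.leaf_b he
    · rcases eq_or_eq_of_outDeg_eq_two C.out_p C.arc_a C.arc_b C.ne he with rfl | rfl
      exacts [hpa rfl, hpb rfl]
    · exact hpb (by rw [eq_of_inDeg_eq_one C.in_b he C.arc_b])
    · exact hup (by rw [eq_of_inDeg_eq_one C.in_p he C.arc_p])
  · exact ⟨⟨(N.mem_V _ C.arc_p).1, C.u_ne_b, C.u_ne_p⟩, (N.mem_V _ C.arc_a).2, C.ne,
      Ne.symm C.p_ne_a⟩

end CherryAt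

structure ReducesAt (N P : Digraph') (a b u p : ℕ) : Prop extends CherryAt N a b u p where
  rewrite : Rewrite N P {b, p} {(u, p), (p, a), (p, b)} {(u, a)}

theorem CherryAt.exists_reducesAt {a b u p : ℕ} (C : CherryAt N a b u p) :
    ∃ P, ReducesAt N P a b u p :=
  C.exists_rewrite.imp fun _ h => ⟨C, h⟩

namespace ReducesAt

variable {a b u p : ℕ} (C : ReducesAt N P a b u p)
include C

theorem inDeg_eq {v : ℕ} (hv : v ∈ P.V) : P.inDeg v = N.inDeg v := by
  have hv' := C.rewrite.mem_V.mp hv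
  simp only [Finset.mem_insert, Finset.mem_singleton, not_or] at hv'
  refine C.rewrite.inDeg_eq C.subset_A C.disjoint_A ?_
  by_cases hva : a = v <;>
    simp [Finset.filter_insert, Finset.filter_singleton, hva, Ne.symm hv'.2.1, Ne.symm hv'.2.2]

theorem outDeg_eq {v : ℕ} (hv : v ∈ P.V) : P.outDeg v = N.outDeg v := by
  have hv' := C.rewrite.mem_V.mp hv
  simp only [Finset.mem_insert, Finset.mem_singleton, not_or] at hv'
  refine C.rewrite.outDeg_eq C.subset_A C.disjoint_A ?_
  by_cases hvu : u = v <;>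
    simp [Finset.filter_insert, Finset.filter_singleton, hvu, Ne.symm hv'.2.2]

theorem eq {u' p' : ℕ} (C' : ReducesAt N Q a b u' p') : P = Q := by
  obtain rfl : p' = p := eq_of_inDeg_eq_one C.in_a C'.arc_a C.arc_a
  obtain rfl : u' = u := eq_of_inDeg_eq_one C.in_p C'.arc_p C.arc_p
  exact C.rewrite.unique C'.rewrite

theorem cherryStep : CherryStep N P := by
  refine ⟨a, b, .inl ⟨⟨C.ne, ⟨(N.mem_V _ C.arc_a).2, C.leaf_a⟩, ⟨(N.mem_V _ C.arc_b).2,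
    C.leaf_b⟩, p, C.arc_a, C.arc_b⟩, p, C.arc_a, C.arc_b, .inr ⟨u, C.arc_p, ?_, ?_⟩⟩⟩
  · ext v; simp only [C.rewrite.V_eq, Finset.mem_erase, Finset.mem_sdiff, Finset.mem_insert,
      Finset.mem_singleton]; tauto
  · ext e; simp only [C.rewrite.A_eq, Finset.mem_insert, Finset.mem_erase, Finset.mem_union,
      Finset.mem_sdiff, Finset.mem_singleton]; tauto

theorem reach {v : ℕ} (hv : v ∈ P.V) {x : ℕ} (hx : N.Reach x u) (hxv : N.Reach x v) :
    P.Reach x v := by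
  have closed : ∀ y z, (y, z) ∈ N.A → y ∈ ({p, a, b} : Set ℕ) → z ∈ ({p, a, b} : Set ℕ) := by
    rintro y z hyz (rfl | rfl | rfl)
    · rcases eq_or_eq_of_outDeg_eq_two C.out_p C.arc_a C.arc_b C.ne hyz with rfl | rfl <;> simp
    · exact absurd hyz (notMem_A_of_outDeg_eq_zero C.leaf_a)
    · exact absurd hyz (notMem_A_of_outDeg_eq_zero C.leaf_b)
  have survives : ∀ y z, (y, z) ∈ N.A → y ∉ ({p, a, b} : Set ℕ) → z ∉ ({p, a, b} : Set ℕ) →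
      (y, z) ∈ P.A := by
    intro y z hyz hy hz
    simp only [Set.mem_insert_iff, Set.mem_singleton_iff, not_or] at hy hz
    exact C.rewrite.mem_A.mpr (.inr ⟨hyz, by simp [hy.1, hz.1]⟩)
  have hv' := C.rewrite.mem_V.mp hv
  simp only [Finset.mem_insert, Finset.mem_singleton, not_or] at hv'
  by_cases hva : v = a
  · subst hva
    refine (reach_of_reach_of_closed closed survives hx ?_).tail (C.rewrite.mem_A.mpr (by simp))
    simp [C.u_ne_p, C.u_ne_a, C.u_ne_b]
  · exact reach_of_reach_of_closed closed survives hxv (by simp [hva, hv'.2.1, hv'.2.2])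

theorem isPhylo : P.IsPhylo P.leaves := by
  obtain ⟨ρ, hρ, hρ0, -, hreach⟩ := C.phylo.root
  have hρP : ρ ∈ P.V := C.rewrite.mem_V.mpr ⟨hρ, by
    simp only [Finset.mem_insert, Finset.mem_singleton, not_or]
    exact ⟨fun h => by simp [h, C.in_b] at hρ0, fun h => by simp [h, C.in_p] at hρ0⟩⟩
  refine C.phylo.of_degrees_eq (fun v hv => (C.rewrite.mem_V.mp hv).1) (fun v => C.inDeg_eq)
    (fun v => C.outDeg_eq) (fun x y hxy => ?_) hρP hρ0
    (fun v hv => C.reach hv (hreach u (N.mem_V _ C.arc_p).1) (hreach v (C.rewrite.mem_V.mp hv).1))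
  rcases C.rewrite.mem_A.mp hxy with h | ⟨h, -⟩
  · obtain ⟨rfl, rfl⟩ : x = u ∧ y = a := by simpa using h
    exact .tail (.single C.arc_p) C.arc_a
  · exact .single h

end ReducesAt

structure RetCherryAt (N : Digraph') (a b pa pb ua q : ℕ) : Prop where
  phylo : N.IsPhylo N.leaves
  ne : a ≠ b
  leaf_a : N.outDeg a = 0
  leaf_b : N.outDeg b = 0
  arc_a : (pa, a) ∈ N.A
  arc_b : (pb, b) ∈ N.A
  ret : N.inDeg pb = 2
  arc_ret : (pa, pb) ∈ N.A
  arc_pa : (ua, pa) ∈ N.A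
  arc_q : (q, pb) ∈ N.A
  q_ne : q ≠ pa

namespace RetCherryAt

variable {a b pa pb ua q : ℕ} (C : RetCherryAt N a b pa pb ua q)
include C

theorem in_a : N.inDeg a = 1 :=
  C.phylo.inDeg_eq_one_of_outDeg_eq_zero (N.mem_V _ C.arc_a).2 C.leaf_a
theorem in_b : N.inDeg b = 1 :=
  C.phylo.inDeg_eq_one_of_outDeg_eq_zero (N.mem_V _ C.arc_b).2 C.leaf_b
theorem a_ne_pb : a ≠ pb := fun h => by simpa [h, C.ret] using C.in_a
theorem out_pa : N.outDeg pa = 2 := C.phylo.outDeg_eq_two C.arc_a C.arc_ret C.a_ne_pb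
theorem in_pa : N.inDeg pa = 1 :=
  C.phylo.inDeg_eq_one_of_two_children C.arc_pa C.arc_a C.arc_ret C.a_ne_pb
theorem out_pb : N.outDeg pb = 1 :=
  C.phylo.outDeg_eq_one_of_inDeg_eq_two (N.mem_V _ C.arc_b).1 C.ret
theorem pa_ne_pb : pa ≠ pb := C.phylo.acyclic.ne C.arc_ret
theorem ua_ne_pa : ua ≠ pa := C.phylo.acyclic.ne C.arc_pa
theorem q_ne_pb : q ≠ pb := C.phylo.acyclic.ne C.arc_q
theorem pa_ne_a : pa ≠ a := ne_of_mem_A_of_outDeg_eq_zero C.arc_a C.leaf_a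
theorem pa_ne_b : pa ≠ b := ne_of_mem_A_of_outDeg_eq_zero C.arc_a C.leaf_b
theorem pb_ne_a : pb ≠ a := ne_of_mem_A_of_outDeg_eq_zero C.arc_b C.leaf_a
theorem pb_ne_b : pb ≠ b := ne_of_mem_A_of_outDeg_eq_zero C.arc_b C.leaf_b
theorem ua_ne_a : ua ≠ a := ne_of_mem_A_of_outDeg_eq_zero C.arc_pa C.leaf_a
theorem ua_ne_b : ua ≠ b := ne_of_mem_A_of_outDeg_eq_zero C.arc_pa C.leaf_b
theorem q_ne_a : q ≠ a := ne_of_mem_A_of_outDeg_eq_zero C.arc_q C.leaf_a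
theorem q_ne_b : q ≠ b := ne_of_mem_A_of_outDeg_eq_zero C.arc_q C.leaf_b
theorem ua_ne_pb : ua ≠ pb := fun h =>
  C.pa_ne_b (eq_of_outDeg_eq_one C.out_pb (h ▸ C.arc_pa) C.arc_b)

theorem subset_A : {(pa, pb), (ua, pa), (pa, a), (q, pb), (pb, b)} ⊆ N.A := by
  simp [Finset.insert_subset_iff, C.arc_ret, C.arc_pa, C.arc_a, C.arc_q, C.arc_b]

theorem disjoint_A : Disjoint N.A {(ua, a), (q, b)} := by
  simp only [Finset.disjoint_insert_right, Finset.disjoint_singleton_right]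
  exact ⟨fun h => C.ua_ne_pa (eq_of_inDeg_eq_one C.in_a h C.arc_a),
    fun h => C.q_ne_pb (eq_of_inDeg_eq_one C.in_b h C.arc_b)⟩

theorem exists_rewrite : ∃ P, Rewrite N P {pa, pb}
    {(pa, pb), (ua, pa), (pa, a), (q, pb), (pb, b)} {(ua, a), (q, b)} := by
  refine Digraph'.exists_rewrite fun e he => ?_
  simp only [Finset.mem_union, Finset.mem_sdiff, Finset.mem_singleton, Finset.mem_insert,
    not_or] at he ⊢
  rcases he with ⟨he, hret, hpa, ha, hq, hb⟩ | rfl | rfl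
  · obtain ⟨x, y⟩ := e
    refine ⟨⟨(N.mem_V _ he).1, fun h => ?_, fun h => ?_⟩, (N.mem_V _ he).2, fun h => ?_,
      fun h => ?_⟩ <;> subst h
    · rcases eq_or_eq_of_outDeg_eq_two C.out_pa C.arc_a C.arc_ret C.a_ne_pb he with rfl | rfl
      exacts [ha rfl, hret rfl]
    · exact hb (by rw [eq_of_outDeg_eq_one C.out_pb he C.arc_b])
    · exact hpa (by rw [eq_of_inDeg_eq_one C.in_pa he C.arc_pa])
    · by_cases hx : x = pa
      · exact hret (by rw [hx])
      · exact hq (by rw [eq_of_inDeg_eq_two C.ret C.arc_ret C.arc_q (Ne.symm C.q_ne) he hx])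
  · exact ⟨⟨(N.mem_V _ C.arc_pa).1, C.ua_ne_pa, C.ua_ne_pb⟩, (N.mem_V _ C.arc_a).2,
      Ne.symm C.pa_ne_a, Ne.symm C.pb_ne_a⟩
  · exact ⟨⟨(N.mem_V _ C.arc_q).1, C.q_ne, C.q_ne_pb⟩, (N.mem_V _ C.arc_b).2,
      Ne.symm C.pa_ne_b, Ne.symm C.pb_ne_b⟩

end RetCherryAt

structure CutsAt (N P : Digraph') (a b pa pb ua q : ℕ) : Prop
    extends RetCherryAt N a b pa pb ua q where
  rewrite : Rewrite N P {pa, pb} {(pa, pb), (ua, pa), (pa, a), (q, pb), (pb, b)} {(ua, a), (q, b)}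

theorem RetCherryAt.exists_cutsAt {a b pa pb ua q : ℕ} (C : RetCherryAt N a b pa pb ua q) :
    ∃ P, CutsAt N P a b pa pb ua q :=
  C.exists_rewrite.imp fun _ h => ⟨C, h⟩

namespace CutsAt

variable {a b pa pb ua q : ℕ} (C : CutsAt N P a b pa pb ua q)
include C

theorem inDeg_eq {v : ℕ} (hv : v ∈ P.V) : P.inDeg v = N.inDeg v := by
  have hv' := C.rewrite.mem_V.mp hv
  simp only [Finset.mem_insert, Finset.mem_singleton, not_or] at hv'
  refine C.rewrite.inDeg_eq C.subset_A C.disjoint_A ?_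
  have : ¬ (a = v ∧ b = v) := fun h => C.ne (h.1.trans h.2.symm)
  by_cases hva : a = v <;> by_cases hvb : b = v <;>
    simp_all [Finset.filter_insert, Finset.filter_singleton, Ne.symm hv'.2.1, Ne.symm hv'.2.2]

theorem outDeg_eq {v : ℕ} (hv : v ∈ P.V) : P.outDeg v = N.outDeg v := by
  have hv' := C.rewrite.mem_V.mp hv
  simp only [Finset.mem_insert, Finset.mem_singleton, not_or] at hv'
  refine C.rewrite.outDeg_eq C.subset_A C.disjoint_A ?_
  by_cases hvu : ua = v <;> by_cases hvq : q = v <;>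
    simp [Finset.filter_insert, Finset.filter_singleton, hvu, hvq, Ne.symm hv'.2.1,
      Ne.symm hv'.2.2, C.pa_ne_pb, C.ne]

theorem eq {pa' pb' ua' q' : ℕ} (C' : CutsAt N Q a b pa' pb' ua' q') :
    P = Q := by
  obtain rfl : pa' = pa := eq_of_inDeg_eq_one C.in_a C'.arc_a C.arc_a
  obtain rfl : pb' = pb := eq_of_inDeg_eq_one C.in_b C'.arc_b C.arc_b
  obtain rfl : ua' = ua := eq_of_inDeg_eq_one C.in_pa C'.arc_pa C.arc_pa
  obtain rfl : q' = q :=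
    eq_of_inDeg_eq_two C.ret C.arc_ret C.arc_q C.q_ne.symm C'.arc_q C'.q_ne
  exact C.rewrite.unique C'.rewrite

theorem cherryStep : CherryStep N P := by
  refine ⟨a, b, .inr ⟨⟨C.ne, ⟨(N.mem_V _ C.arc_a).2, C.leaf_a⟩, ⟨(N.mem_V _ C.arc_b).2,
    C.leaf_b⟩, pa, pb, C.arc_a, C.arc_b, C.ret, C.arc_ret⟩, pa, pb, ua, q, C.arc_a, C.arc_b,
    C.ret, C.arc_ret, C.arc_pa, C.arc_q, C.q_ne, ?_, ?_⟩⟩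
  · ext v; simp only [C.rewrite.V_eq, Finset.mem_erase, Finset.mem_sdiff, Finset.mem_insert,
      Finset.mem_singleton]; tauto
  · ext e; simp only [C.rewrite.A_eq, Finset.mem_insert, Finset.mem_erase, Finset.mem_union,
      Finset.mem_sdiff, Finset.mem_singleton]; tauto

theorem reach {v : ℕ} (hv : v ∈ P.V) {x : ℕ} (hxa : N.Reach x ua) (hxb : N.Reach x q)
    (hxv : N.Reach x v) : P.Reach x v := by
  have closed : ∀ y z, (y, z) ∈ N.A → y ∈ ({pa, pb, a, b} : Set ℕ) →
      z ∈ ({pa, pb, a, b} : Set ℕ) := by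
    rintro y z hyz (rfl | rfl | rfl | rfl)
    · rcases eq_or_eq_of_outDeg_eq_two C.out_pa C.arc_a C.arc_ret C.a_ne_pb hyz with
        rfl | rfl <;> simp
    · simp [eq_of_outDeg_eq_one C.out_pb hyz C.arc_b]
    · exact absurd hyz (notMem_A_of_outDeg_eq_zero C.leaf_a)
    · exact absurd hyz (notMem_A_of_outDeg_eq_zero C.leaf_b)
  have survives : ∀ y z, (y, z) ∈ N.A → y ∉ ({pa, pb, a, b} : Set ℕ) →
      z ∉ ({pa, pb, a, b} : Set ℕ) → (y, z) ∈ P.A := by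
    intro y z hyz hy hz
    simp only [Set.mem_insert_iff, Set.mem_singleton_iff, not_or] at hy hz
    exact C.rewrite.mem_A.mpr (.inr ⟨hyz, by simp [hy.1, hy.2.1, hz.1, hz.2.1]⟩)
  have hv' := C.rewrite.mem_V.mp hv
  simp only [Finset.mem_insert, Finset.mem_singleton, not_or] at hv'
  by_cases hva : v = a
  · subst hva
    refine (reach_of_reach_of_closed closed survives hxa ?_).tail (C.rewrite.mem_A.mpr (by simp))
    simp [C.ua_ne_pa, C.ua_ne_pb, C.ua_ne_a, C.ua_ne_b]
  by_cases hvb : v = b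
  · subst hvb
    refine (reach_of_reach_of_closed closed survives hxb ?_).tail (C.rewrite.mem_A.mpr (by simp))
    simp [C.q_ne, C.q_ne_pb, C.q_ne_a, C.q_ne_b]
  exact reach_of_reach_of_closed closed survives hxv (by simp [hva, hvb, hv'.2.1, hv'.2.2])

theorem isPhylo : P.IsPhylo P.leaves := by
  obtain ⟨ρ, hρ, hρ0, -, hreach⟩ := C.phylo.root
  have hρP : ρ ∈ P.V := C.rewrite.mem_V.mpr ⟨hρ, by
    simp only [Finset.mem_insert, Finset.mem_singleton, not_or]
    exact ⟨fun h => by simp [h, C.in_pa] at hρ0, fun h => by simp [h, C.ret] at hρ0⟩⟩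
  refine C.phylo.of_degrees_eq (fun v hv => (C.rewrite.mem_V.mp hv).1) (fun v => C.inDeg_eq)
    (fun v => C.outDeg_eq) (fun x y hxy => ?_) hρP hρ0 (fun v hv => C.reach hv
      (hreach ua (N.mem_V _ C.arc_pa).1) (hreach q (N.mem_V _ C.arc_q).1)
      (hreach v (C.rewrite.mem_V.mp hv).1))
  rcases C.rewrite.mem_A.mp hxy with h | ⟨h, -⟩
  · simp only [Finset.mem_insert, Finset.mem_singleton, Prod.mk.injEq] at h
    rcases h with ⟨rfl, rfl⟩ | ⟨rfl, rfl⟩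
    · exact .tail (.single C.arc_pa) C.arc_a
    · exact .tail (.single C.arc_q) C.arc_b
  · exact .single h

end CutsAt

theorem IsPhylo.cherryStep_cases (hN : N.IsPhylo N.leaves) (h : CherryStep N P) :
    (∀ Q, CherryStep N Q → IsSingle Q) ∨ (∃ a b u p, ReducesAt N P a b u p) ∨
      ∃ a b pa pb ua q, CutsAt N P a b pa pb ua q := by
  obtain ⟨a, b, ⟨⟨hab, ⟨-, hla⟩, ⟨-, hlb⟩, -⟩, p, hpa, hpb, ⟨h0, -⟩ | ⟨u, hup, hV, hA⟩⟩ |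
    ⟨⟨hab, ⟨-, hla⟩, ⟨-, hlb⟩, -⟩, pa, pb, ua, q, hpa, hpb, h2, hret, hua, hq, hqpa, hV, hA⟩⟩ := h
  · exact .inl fun Q => hN.isSingle_of_root_cherry hpa hpb hab hla hlb h0
  · refine .inr (.inl ⟨a, b, u, p, ⟨hN, hab, hla, hlb, hpa, hpb, hup⟩, ⟨?_, ?_⟩⟩)
    · ext v; simp only [hV, Finset.mem_erase, Finset.mem_sdiff, Finset.mem_insert,
        Finset.mem_singleton]; tauto
    · ext e; simp only [hA, Finset.mem_insert, Finset.mem_erase, Finset.mem_union,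
        Finset.mem_sdiff, Finset.mem_singleton]; tauto
  · refine .inr (.inr ⟨a, b, pa, pb, ua, q,
      ⟨hN, hab, hla, hlb, hpa, hpb, h2, hret, hua, hq, hqpa⟩, ⟨?_, ?_⟩⟩)
    · ext v; simp only [hV, Finset.mem_erase, Finset.mem_sdiff, Finset.mem_insert,
        Finset.mem_singleton]; tauto
    · ext e; simp only [hA, Finset.mem_insert, Finset.mem_erase, Finset.mem_union,
        Finset.mem_sdiff, Finset.mem_singleton]; tauto

theorem IsNetwork.cherryStep (hN : N.IsNetwork) (h : CherryStep N P) : P.IsNetwork := by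
  rcases hN with hN | hN
  · rcases hN.cherryStep_cases h with h' | ⟨_, _, _, _, C⟩ | ⟨_, _, _, _, _, _, C⟩
    exacts [.inr (h' P h), .inl C.isPhylo, .inl C.isPhylo]
  · exact absurd h (not_cherryStep_of_isSingle hN)

theorem CherryAt.disjoint {a b u p c d u' p' : ℕ} (C : CherryAt N a b u p)
    (C' : CherryAt N c d u' p') (hp : p ≠ p') :
    Disjoint ({p, a, b} : Finset ℕ) {p', c, d} := by
  simp only [Finset.disjoint_insert_left, Finset.disjoint_singleton_left, Finset.mem_insert,
    Finset.mem_singleton, not_or]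
  exact ⟨⟨hp, ne_of_mem_A_of_outDeg_eq_zero C.arc_a C'.leaf_a,
      ne_of_mem_A_of_outDeg_eq_zero C.arc_a C'.leaf_b⟩,
    ⟨(ne_of_mem_A_of_outDeg_eq_zero C'.arc_a C.leaf_a).symm,
      ne_of_parent_ne C.arc_a C'.arc_a C.in_a hp, ne_of_parent_ne C.arc_a C'.arc_b C.in_a hp⟩,
    ⟨(ne_of_mem_A_of_outDeg_eq_zero C'.arc_a C.leaf_b).symm,
      ne_of_parent_ne C.arc_b C'.arc_a C.in_b hp, ne_of_parent_ne C.arc_b C'.arc_b C.in_b hp⟩⟩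

theorem CherryAt.disjoint_retCherryAt {a b u p c d pc pd uc q : ℕ} (C : CherryAt N a b u p)
    (C' : RetCherryAt N c d pc pd uc q) :
    Disjoint ({p, a, b} : Finset ℕ) {pc, pd, c, d} := by
  have hpd : ∀ {x}, N.inDeg x = 1 → x ≠ pd := fun hx =>
    ne_of_apply_ne N.inDeg (by rw [hx, C'.ret]; omega)
  have hpc : p ≠ pc := fun h => by
    rcases eq_or_eq_of_outDeg_eq_two C.out_p C.arc_a C.arc_b C.ne (h ▸ C'.arc_ret) with h' | h'
    exacts [hpd C.in_a h'.symm, hpd C.in_b h'.symm]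
  simp only [Finset.disjoint_insert_left, Finset.disjoint_singleton_left, Finset.mem_insert,
    Finset.mem_singleton, not_or]
  exact ⟨⟨hpc, hpd C.in_p, ne_of_mem_A_of_outDeg_eq_zero C.arc_a C'.leaf_a,
      ne_of_mem_A_of_outDeg_eq_zero C.arc_a C'.leaf_b⟩,
    ⟨(ne_of_mem_A_of_outDeg_eq_zero C'.arc_a C.leaf_a).symm, hpd C.in_a,
      ne_of_parent_ne C.arc_a C'.arc_a C.in_a hpc, ne_of_parent_ne C.arc_a C'.arc_b C.in_a
        (hpd C.in_p)⟩,
    ⟨(ne_of_mem_A_of_outDeg_eq_zero C'.arc_a C.leaf_b).symm, hpd C.in_b,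
      ne_of_parent_ne C.arc_b C'.arc_a C.in_b hpc, ne_of_parent_ne C.arc_b C'.arc_b C.in_b
        (hpd C.in_p)⟩⟩

theorem RetCherryAt.disjoint {a b pa pb ua q c d pc pd uc q' : ℕ}
    (C : RetCherryAt N a b pa pb ua q) (C' : RetCherryAt N c d pc pd uc q') (hpb : pb ≠ pd) :
    Disjoint ({pa, pb, a, b} : Finset ℕ) {pc, pd, c, d} := by
  have hpa : pa ≠ pc := fun h => by
    rcases eq_or_eq_of_outDeg_eq_two C.out_pa C.arc_a C.arc_ret C.a_ne_pb (h ▸ C'.arc_ret)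
      with h' | h'
    exacts [ne_of_mem_A_of_outDeg_eq_zero C'.arc_b C.leaf_a h', hpb h'.symm]
  have ne_in : ∀ {x y}, N.inDeg x = 1 → N.inDeg y = 2 → x ≠ y := fun hx hy =>
    ne_of_apply_ne N.inDeg (by rw [hx, hy]; omega)
  simp only [Finset.disjoint_insert_left, Finset.disjoint_singleton_left, Finset.mem_insert,
    Finset.mem_singleton, not_or]
  exact ⟨⟨hpa, ne_in C.in_pa C'.ret, ne_of_mem_A_of_outDeg_eq_zero C.arc_a C'.leaf_a,
      ne_of_mem_A_of_outDeg_eq_zero C.arc_a C'.leaf_b⟩,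
    ⟨(ne_in C'.in_pa C.ret).symm, hpb, ne_of_mem_A_of_outDeg_eq_zero C.arc_b C'.leaf_a,
      ne_of_mem_A_of_outDeg_eq_zero C.arc_b C'.leaf_b⟩,
    ⟨(ne_of_mem_A_of_outDeg_eq_zero C'.arc_a C.leaf_a).symm,
      (ne_of_mem_A_of_outDeg_eq_zero C'.arc_b C.leaf_a).symm,
      ne_of_parent_ne C.arc_a C'.arc_a C.in_a hpa,
      ne_of_parent_ne C.arc_a C'.arc_b C.in_a (ne_in C.in_pa C'.ret)⟩,
    ⟨(ne_of_mem_A_of_outDeg_eq_zero C'.arc_a C.leaf_b).symm,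
      (ne_of_mem_A_of_outDeg_eq_zero C'.arc_b C.leaf_b).symm,
      ne_of_parent_ne C.arc_b C'.arc_a C.in_b (ne_in C'.in_pa C.ret).symm,
      ne_of_parent_ne C.arc_b C'.arc_b C.in_b hpb⟩⟩

structure AgreesOff (N P : Digraph') (T : Finset ℕ) : Prop where
  phylo : P.IsPhylo P.leaves
  mem_V : ∀ v ∈ N.V, v ∉ T → v ∈ P.V
  inDeg_eq : ∀ v ∈ P.V, P.inDeg v = N.inDeg v
  outDeg_eq : ∀ v ∈ P.V, P.outDeg v = N.outDeg v
  mem_A : ∀ x y, (x, y) ∈ N.A → y ∉ T → (x, y) ∈ P.A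

namespace AgreesOff

variable {T : Finset ℕ} (h : AgreesOff N P T)
include h

theorem cherryAt {a b u p : ℕ} (C : CherryAt N a b u p) (hT : Disjoint T {p, a, b}) :
    CherryAt P a b u p := by
  simp only [Finset.disjoint_insert_right, Finset.disjoint_singleton_right] at hT
  have ha := h.mem_V a (N.mem_V _ C.arc_a).2 hT.2.1
  have hb := h.mem_V b (N.mem_V _ C.arc_b).2 hT.2.2
  exact ⟨h.phylo, C.ne, by rw [h.outDeg_eq a ha, C.leaf_a], by rw [h.outDeg_eq b hb, C.leaf_b],
    h.mem_A _ _ C.arc_a hT.2.1, h.mem_A _ _ C.arc_b hT.2.2, h.mem_A _ _ C.arc_p hT.1⟩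

theorem retCherryAt {a b pa pb ua q : ℕ} (C : RetCherryAt N a b pa pb ua q)
    (hT : Disjoint T {pa, pb, a, b}) : RetCherryAt P a b pa pb ua q := by
  simp only [Finset.disjoint_insert_right, Finset.disjoint_singleton_right] at hT
  have ha := h.mem_V a (N.mem_V _ C.arc_a).2 hT.2.2.1
  have hb := h.mem_V b (N.mem_V _ C.arc_b).2 hT.2.2.2
  have hpb := h.mem_V pb (N.mem_V _ C.arc_b).1 hT.2.1
  exact ⟨h.phylo, C.ne, by rw [h.outDeg_eq a ha, C.leaf_a], by rw [h.outDeg_eq b hb, C.leaf_b],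
    h.mem_A _ _ C.arc_a hT.2.2.1, h.mem_A _ _ C.arc_b hT.2.2.2, by rw [h.inDeg_eq pb hpb, C.ret],
    h.mem_A _ _ C.arc_ret hT.2.1, h.mem_A _ _ C.arc_pa hT.1, h.mem_A _ _ C.arc_q hT.2.1, C.q_ne⟩

end AgreesOff

theorem ReducesAt.agreesOff {a b u p : ℕ} (C : ReducesAt N P a b u p) :
    AgreesOff N P {p, a, b} where
  phylo := C.isPhylo
  mem_V v hv hT := C.rewrite.mem_V.mpr ⟨hv, by simp_all⟩
  inDeg_eq _ := C.inDeg_eq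
  outDeg_eq _ := C.outDeg_eq
  mem_A x y hxy hT := C.rewrite.mem_A.mpr (.inr ⟨hxy, by simp_all⟩)

theorem CutsAt.agreesOff {a b pa pb ua q : ℕ} (C : CutsAt N P a b pa pb ua q) :
    AgreesOff N P {pa, pb, a, b} where
  phylo := C.isPhylo
  mem_V v hv hT := C.rewrite.mem_V.mpr ⟨hv, by simp_all⟩
  inDeg_eq _ := C.inDeg_eq
  outDeg_eq _ := C.outDeg_eq
  mem_A x y hxy hT := C.rewrite.mem_A.mpr (.inr ⟨hxy, by simp_all⟩)

theorem ReducesAt.join_of_disjoint {a b u p c d u' p' : ℕ} (C : ReducesAt N P a b u p)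
    (C' : ReducesAt N Q c d u' p') (hT : Disjoint ({p, a, b} : Finset ℕ) {p', c, d}) :
    Relation.Join CherryStep P Q := by
  obtain ⟨R, hR⟩ := (C.agreesOff.cherryAt C'.toCherryAt hT).exists_reducesAt
  obtain ⟨R', hR'⟩ := (C'.agreesOff.cherryAt C.toCherryAt hT.symm).exists_reducesAt
  refine ⟨R, hR.cherryStep, ?_⟩
  rw [C.rewrite.eq_of_disjoint hR.rewrite C'.rewrite hR'.rewrite hT (by simp) (by simp)]
  exact hR'.cherryStep

theorem ReducesAt.join_cutsAt {a b u p c d pc pd uc q : ℕ} (C : ReducesAt N P a b u p)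
    (C' : CutsAt N Q c d pc pd uc q) : Relation.Join CherryStep P Q := by
  have hT := C.disjoint_retCherryAt C'.toRetCherryAt
  obtain ⟨R, hR⟩ := (C.agreesOff.retCherryAt C'.toRetCherryAt hT).exists_cutsAt
  obtain ⟨R', hR'⟩ := (C'.agreesOff.cherryAt C.toCherryAt hT.symm).exists_reducesAt
  refine ⟨R, hR.cherryStep, ?_⟩
  rw [C.rewrite.eq_of_disjoint hR.rewrite C'.rewrite hR'.rewrite hT (by simp) (by simp)]
  exact hR'.cherryStep

theorem CutsAt.join_of_disjoint {a b pa pb ua q c d pc pd uc q' : ℕ}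
    (C : CutsAt N P a b pa pb ua q) (C' : CutsAt N Q c d pc pd uc q')
    (hT : Disjoint ({pa, pb, a, b} : Finset ℕ) {pc, pd, c, d}) :
    Relation.Join CherryStep P Q := by
  obtain ⟨R, hR⟩ := (C.agreesOff.retCherryAt C'.toRetCherryAt hT).exists_cutsAt
  obtain ⟨R', hR'⟩ := (C'.agreesOff.retCherryAt C.toRetCherryAt hT.symm).exists_cutsAt
  refine ⟨R, hR.cherryStep, ?_⟩
  rw [C.rewrite.eq_of_disjoint hR.rewrite C'.rewrite hR'.rewrite hT (by simp) (by simp)]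
  exact hR'.cherryStep

theorem CherryAt.map_swap {a b u p : ℕ} (C : CherryAt N a b u p) :
    N.map (Equiv.swap a b) = N := by
  have fix : ∀ {x}, x ≠ a → x ≠ b → Equiv.swap a b x = x := Equiv.swap_apply_of_ne_of_ne
  have hV : ∀ v ∈ N.V, Equiv.swap a b v ∈ N.V := fun v hv => by
    by_cases hva : v = a
    · simpa [hva] using (N.mem_V _ C.arc_b).2
    by_cases hvb : v = b
    · simpa [hvb] using (N.mem_V _ C.arc_a).2
    simpa [fix hva hvb] using hv
  have hA : ∀ x y, (x, y) ∈ N.A → (Equiv.swap a b x, Equiv.swap a b y) ∈ N.A := by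
    intro x y h
    rw [fix (ne_of_mem_A_of_outDeg_eq_zero h C.leaf_a) (ne_of_mem_A_of_outDeg_eq_zero h C.leaf_b)]
    by_cases hya : y = a
    · subst hya; simpa [eq_of_inDeg_eq_one C.in_a h C.arc_a] using C.arc_b
    by_cases hyb : y = b
    · subst hyb; simpa [eq_of_inDeg_eq_one C.in_b h C.arc_b] using C.arc_a
    simpa [fix hya hyb] using h
  refine ext ?_ ?_
  · ext v
    simp only [map_V, Finset.mem_map_equiv, Equiv.symm_swap]
    exact ⟨fun h => by simpa using hV _ h, hV v⟩
  · ext ⟨x, y⟩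
    simp only [map_A, Finset.mem_map_equiv, Equiv.prodCongr_symm, Equiv.symm_swap,
      Equiv.prodCongr_apply, Prod.map]
    exact ⟨fun h => by simpa using hA _ _ h, hA x y⟩

theorem ReducesAt.eq_map_swap {a b u p : ℕ} (C : ReducesAt N P a b u p)
    (C' : ReducesAt N Q b a u p) : Q = P.map (Equiv.swap a b) := by
  have h := C.rewrite.map (Equiv.swap a b)
  rw [C.map_swap] at h
  simp only [Finset.map_insert, Finset.map_singleton, Equiv.coe_toEmbedding,
    Equiv.prodCongr_apply, Prod.map, Equiv.swap_apply_left, Equiv.swap_apply_right,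
    Equiv.swap_apply_of_ne_of_ne C.u_ne_a C.u_ne_b,
    Equiv.swap_apply_of_ne_of_ne C.p_ne_a C.p_ne_b] at h
  exact C'.rewrite.unique h

theorem CutsAt.cherryAt_of_shared_leaf {a b pa pb ua q c uc : ℕ} (C : CutsAt N P a b pa pb ua q)
    (C' : RetCherryAt N c b q pb uc pa) : CherryAt P c b uc q := by
  have hc : Disjoint ({pa, pb, a, b} : Finset ℕ) {c} := by
    simp [Ne.symm (ne_of_mem_A_of_outDeg_eq_zero C.arc_a C'.leaf_a),
      Ne.symm (ne_of_mem_A_of_outDeg_eq_zero C.arc_b C'.leaf_a),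
      ne_of_parent_ne C'.arc_a C.arc_a C'.in_a C.q_ne, C'.ne]
  have hq : Disjoint ({pa, pb, a, b} : Finset ℕ) {q} := by
    simp [C.q_ne, C.q_ne_pb, C.q_ne_a, C.q_ne_b]
  have hcP := C.agreesOff.mem_V c (N.mem_V _ C'.arc_a).2 (Finset.disjoint_singleton_right.mp hc)
  have hbP := C.rewrite.mem_V.mpr ⟨(N.mem_V _ C.arc_b).2, by simp [Ne.symm C.pa_ne_b,
    Ne.symm C.pb_ne_b]⟩
  exact ⟨C.isPhylo, C'.ne, by rw [C.outDeg_eq hcP, C'.leaf_a], by rw [C.outDeg_eq hbP, C.leaf_b],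
    C.agreesOff.mem_A _ _ C'.arc_a (Finset.disjoint_singleton_right.mp hc),
    C.rewrite.mem_A.mpr (.inl (by simp)),
    C.agreesOff.mem_A _ _ C'.arc_pa (Finset.disjoint_singleton_right.mp hq)⟩

theorem CutsAt.join_of_shared_leaf {a b pa pb ua q c uc : ℕ}
    (C : CutsAt N P a b pa pb ua q) (C' : CutsAt N Q c b q pb uc pa) :
    Relation.Join CherryStep P Q := by
  obtain ⟨R, hR⟩ := (C.cherryAt_of_shared_leaf C'.toRetCherryAt).exists_reducesAt
  obtain ⟨R', hR'⟩ := (C'.cherryAt_of_shared_leaf C.toRetCherryAt).exists_reducesAt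
  refine ⟨R, hR.cherryStep, ?_⟩
  have hac : a ≠ c := ne_of_parent_ne C.arc_a C'.arc_a C.in_a C.q_ne.symm
  have hqb : (q, b) ∉ N.A := fun h => C.q_ne_pb (eq_of_inDeg_eq_one C.in_b h C.arc_b)
  have hpab : (pa, b) ∉ N.A := fun h => C.pa_ne_pb (eq_of_inDeg_eq_one C.in_b h C.arc_b)
  have hR_eq : R = R' := by
    refine ext ?_ ?_
    · ext v
      simp only [hR.rewrite.mem_V, C.rewrite.mem_V, hR'.rewrite.mem_V, C'.rewrite.mem_V,
        Finset.mem_insert, Finset.mem_singleton]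
      tauto
    · ext e
      simp only [hR.rewrite.mem_A, C.rewrite.mem_A, hR'.rewrite.mem_A, C'.rewrite.mem_A,
        Finset.mem_insert, Finset.mem_singleton]
      grind [C.q_ne_a, C'.q_ne_a, C.ne, C'.ne]
  exact hR_eq ▸ hR'.cherryStep

theorem ReducesAt.eq_map_or_join {a b u p c d u' p' : ℕ} (C : ReducesAt N P a b u p)
    (C' : ReducesAt N Q c d u' p') :
    (∃ σ, Q = P.map σ) ∨ Relation.Join CherryStep P Q := by
  by_cases hp : p = p'
  · subst hp
    rcases eq_or_eq_of_outDeg_eq_two C.out_p C.arc_a C.arc_b C.ne C'.arc_a with rfl | rfl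
    · obtain rfl := (eq_or_eq_of_outDeg_eq_two C.out_p C.arc_a C.arc_b C.ne C'.arc_b).resolve_left
        C'.ne.symm
      exact .inl ⟨Equiv.refl ℕ, by rw [map_refl, C.eq C']⟩
    · obtain rfl := (eq_or_eq_of_outDeg_eq_two C.out_p C.arc_a C.arc_b C.ne C'.arc_b).resolve_right
        C'.ne.symm
      obtain rfl := eq_of_inDeg_eq_one C.in_p C'.arc_p C.arc_p
      exact .inl ⟨_, C.eq_map_swap C'⟩
  · exact .inr (C.join_of_disjoint C' (C.disjoint C'.toCherryAt hp))

theorem CutsAt.eq_map_or_join {a b pa pb ua q c d pc pd uc q' : ℕ} (C : CutsAt N P a b pa pb ua q)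
    (C' : CutsAt N Q c d pc pd uc q') :
    (∃ σ, Q = P.map σ) ∨ Relation.Join CherryStep P Q := by
  by_cases hpb : pb = pd
  · subst hpb
    obtain rfl := eq_of_outDeg_eq_one C.out_pb C'.arc_b C.arc_b
    by_cases hpc : pc = pa
    · subst hpc
      obtain rfl := (eq_or_eq_of_outDeg_eq_two C.out_pa C.arc_a C.arc_ret C.a_ne_pb
        C'.arc_a).resolve_right (ne_of_mem_A_of_outDeg_eq_zero C.arc_b C'.leaf_a).symm
      exact .inl ⟨Equiv.refl ℕ, by rw [map_refl, C.eq C']⟩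
    · obtain rfl := eq_of_inDeg_eq_two C.ret C.arc_ret C.arc_q C.q_ne.symm C'.arc_ret hpc
      obtain rfl := eq_of_inDeg_eq_two C.ret C.arc_q C.arc_ret C.q_ne C'.arc_q C'.q_ne
      exact .inr (C.join_of_shared_leaf C')
  · exact .inr (C.join_of_disjoint C' (C.disjoint C'.toRetCherryAt hpb))

theorem IsPhylo.eq_map_or_join (hN : N.IsPhylo N.leaves) (hP : CherryStep N P)
    (hQ : CherryStep N Q) : (∃ σ, Q = P.map σ) ∨ Relation.Join CherryStep P Q := by
  have root : (∀ Z, CherryStep N Z → IsSingle Z) → ∃ σ, Q = P.map σ := fun h =>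
    (h P hP).exists_eq_map (h Q hQ)
  rcases hN.cherryStep_cases hP with h | ⟨_, _, _, _, C⟩ | ⟨_, _, _, _, _, _, C⟩
  · exact .inl (root h)
  all_goals rcases hN.cherryStep_cases hQ with h | ⟨_, _, _, _, C'⟩ | ⟨_, _, _, _, _, _, C'⟩
  · exact .inl (root h)
  · exact C.eq_map_or_join C'
  · exact .inr (C.join_cutsAt C')
  · exact .inl (root h)
  · exact .inr ((C'.join_cutsAt C).imp fun _ h => h.symm)
  · exact C.eq_map_or_join C'

theorem IsOrchard.of_cherryStep (hN : N.IsNetwork) (hO : N.IsOrchard) (h : CherryStep N P) :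
    P.IsOrchard := by
  obtain ⟨M, hNM, hM⟩ := hO
  induction hNM using Relation.ReflTransGen.head_induction_on generalizing P with
  | refl => exact absurd h (not_cherryStep_of_isSingle hM)
  | @head N B hNB hBM ih =>
    rcases hN with hN | hN
    · rcases hN.eq_map_or_join h hNB with ⟨σ, hB⟩ | ⟨R, hPR, hBR⟩
      · exact IsOrchard.of_map (σ := σ) (hB ▸ ⟨M, hBM, hM⟩)
      · obtain ⟨M', hRM', hM'⟩ := ih (hN.isNetwork.cherryStep hNB) hBR
        exact ⟨M', .head hPR hRM', hM'⟩
    · exact absurd h (not_cherryStep_of_isSingle hN)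

theorem IsOrchard.isSingle_of_maximal (hO : N.IsOrchard)
    (hmax : ¬ ∃ a b, N.IsCherry a b ∨ N.IsRetCherry a b) : IsSingle N := by
  obtain ⟨M, hNM, hM⟩ := hO
  rcases hNM.cases_head with rfl | ⟨B, ⟨a, b, h | h⟩, -⟩
  exacts [hM, absurd ⟨a, b, .inl h.1⟩ hmax, absurd ⟨a, b, .inr h.1⟩ hmax]

theorem IsOrchard.isSingle_of_reflTransGen {N' : Digraph'} (hN : N.IsNetwork) (hO : N.IsOrchard)
    (hseq : Relation.ReflTransGen CherryStep N N')
    (hmax : ¬ ∃ a b, N'.IsCherry a b ∨ N'.IsRetCherry a b) : IsSingle N' := by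
  induction hseq using Relation.ReflTransGen.head_induction_on with
  | refl => exact hO.isSingle_of_maximal hmax
  | head hstep _ ih => exact ih (hN.cherryStep hstep) (hO.of_cherryStep hN hstep)

end Digraph'

/-- every maximal sequence of cherry reductions applied to an orchard
network is complete, i.e. ends in the single-vertex network. -/
theorem stmt_11 (N N' : Digraph') (X : Finset ℕ)
    (hnet : N.IsPhylo X ∨ IsSingle N)
    (horch : N.IsOrchard)
    (hseq : Relation.ReflTransGen CherryStep N N')
    (hmax : ¬ ∃ a b, N'.IsCherry a b ∨ N'.IsRetCherry a b) :
    IsSingle N' :=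
  horch.isSingle_of_reflTransGen (hnet.elim IsPhylo.isNetwork .inr) hseq hmax
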